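/- arXiv:2211.09341 — 4 statements merged into one kernel-verified Lean document; each statement's English description precedes it below -/
import Mathlib

section
/- Let G be a bi-regular bipartite graph with parts A and B and edge set E (every vertex of A has the same degree and every vertex of B has the same degree, both positive), and let λ(G) be its second largest normalized singular value. Then for every nonempty subset B' ⊆ B of density μ = |B'|/|B| and every E' ⊆ E, |p₁ − p₂| ≤ λ(G)/√μ, where p₁ is the probability that (a,b) ∈ E' when b is uniform in B' and a is uniform among the neighbors of b, and p₂ is the average over a uniform a ∈ A of the fraction of b ∈ N(a) ∩ B' with (a,b) ∈ E' (this fraction taken to be 0 when N(a) ∩ B' is empty). -/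
/-!
Let `f a ∈ [0, 1]` be the fraction of the edges from `a` into `B'` that lie in `E'`, and `χ` the
indicator of `B'`. Pairing `f` with the image of `χ` under the normalized adjacency matrix minus its
rank-one top part gives, after double counting (`dA |A| = dB |B|`), the gap `p₁ - p₂` up to the
factor `√|B| / (√|A| |B'|)`. Cauchy–Schwarz and the operator norm bound that pairing by
`λ ‖f‖ ‖χ‖ ≤ λ √|A| √|B'|`.
-/

/-- The second largest normalized singular value of a bi-regular bipartite graph with parts
`A`, `B`, edge set `E` and degrees `dA` (on `A`) and `dB` (on `B`): for a bi-regular graph the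
normalized adjacency matrix `M` (with entries `1/√(dA·dB)` on edges) has top singular value `1`
attained on the normalized all-ones vectors, so the second largest singular value is the
operator norm of `M` minus its top rank-one component, whose entries are all
`1/√(|A|·|B|)`. -/
noncomputable def lambdaBip {A B : Type} [Fintype A] [Fintype B] [DecidableEq A] [DecidableEq B]
    (E : Finset (A × B)) (dA dB : ℕ) : ℝ :=
  ‖LinearMap.toContinuousLinearMap (Matrix.toEuclideanLin
    (Matrix.of fun (a : A) (b : B) =>
      (if (a, b) ∈ E then 1 / Real.sqrt ((dA : ℝ) * (dB : ℝ)) else 0) -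
        1 / Real.sqrt ((Fintype.card A : ℝ) * (Fintype.card B : ℝ))))‖

open Finset Matrix
open scoped Matrix.Norms.L2Operator

lemma abs_dotProduct_mulVec_le {m n : Type} [Fintype m] [Fintype n] [DecidableEq n]
    (N : Matrix m n ℝ) (x : m → ℝ) (y : n → ℝ) :
    |x ⬝ᵥ N *ᵥ y| ≤ ‖N‖ * ‖WithLp.toLp 2 x‖ * ‖WithLp.toLp 2 y‖ :=
  calc |x ⬝ᵥ N *ᵥ y| = |inner ℝ (WithLp.toLp 2 x) (WithLp.toLp 2 (N *ᵥ y))| := by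
        rw [EuclideanSpace.inner_toLp_toLp, star_trivial, dotProduct_comm]
    _ ≤ ‖WithLp.toLp 2 x‖ * ‖WithLp.toLp 2 (N *ᵥ y)‖ := abs_real_inner_le_norm _ _
    _ ≤ ‖WithLp.toLp 2 x‖ * (‖N‖ * ‖WithLp.toLp 2 y‖) := by
        gcongr
        exact N.l2_opNorm_mulVec _
    _ = ‖N‖ * ‖WithLp.toLp 2 x‖ * ‖WithLp.toLp 2 y‖ := by ring

lemma norm_toLp_le_sqrt_card {ι : Type} [Fintype ι] (x : ι → ℝ) (hx : ∀ i, |x i| ≤ 1) :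
    ‖WithLp.toLp 2 x‖ ≤ √(Fintype.card ι) := by
  rw [EuclideanSpace.norm_eq]
  gcongr
  calc ∑ i, ‖x i‖ ^ 2 ≤ ∑ _i : ι, 1 := by
        gcongr with i
        exact pow_le_one₀ (norm_nonneg _) (hx i)
    _ = Fintype.card ι := by simp

lemma norm_toLp_indicator {ι : Type} [Fintype ι] [DecidableEq ι] (s : Finset ι) :
    ‖WithLp.toLp 2 (fun i => if i ∈ s then (1 : ℝ) else 0)‖ = √(#s) := by
  rw [EuclideanSpace.norm_eq]
  simp

lemma sub_eq_mul_of_biregular {nA nB k dA dB S F : ℝ} (hnA : 0 < nA) (hnB : 0 < nB) (hk : k ≠ 0)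
    (hdA : 0 < dA) (hdB : 0 < dB) (hcount : dA * nA = dB * nB) :
    S / dB / k - F / nA = √nB / (√nA * k) * (S / √(dA * dB) - k * F / √(nA * nB)) := by
  have hroot : √dA * √nA = √dB * √nB := by
    rw [← Real.sqrt_mul hdA.le, ← Real.sqrt_mul hdB.le, hcount]
  have := Real.sqrt_pos.2 hnA
  have := Real.sqrt_pos.2 hnB
  have := Real.sqrt_pos.2 hdA
  have := Real.sqrt_pos.2 hdB
  have hS : √nB / (√nA * k) * (S / (√dA * √dB)) = S / dB / k := by
    field_simp
    linear_combination (-S * √dB) * hroot - √nB * S * Real.mul_self_sqrt hdB.le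
  have hF : √nB / (√nA * k) * (k * F / (√nA * √nB)) = F / nA := by
    field_simp
    rw [Real.sq_sqrt hnA.le, mul_comm]
  rw [Real.sqrt_mul hdA.le, Real.sqrt_mul hnA.le, mul_sub, hS, hF]

lemma mul_sqrt_div_eq_div_sqrt_div {lam nA nB k : ℝ} (hnA : 0 < nA) (hnB : 0 < nB) (hk : 0 < k) :
    √nB / (√nA * k) * (lam * √nA * √k) = lam / √(k / nB) := by
  rw [Real.sqrt_div hk.le, ← Real.mul_self_sqrt hk.le, Real.sqrt_mul_self (Real.sqrt_nonneg _)]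
  have := Real.sqrt_pos.2 hnA
  have := Real.sqrt_pos.2 hnB
  have := Real.sqrt_pos.2 hk
  field_simp

section Bipartite

variable {A B : Type}

lemma card_filter_fst_eq_and_snd_mem [DecidableEq A] [DecidableEq B]
    (F : Finset (A × B)) (a : A) (B' : Finset B) :
    #{e ∈ F | e.1 = a ∧ e.2 ∈ B'} = #{b ∈ B' | (a, b) ∈ F} := by
  refine card_nbij' Prod.snd (fun b => (a, b)) ?_ ?_ ?_ ?_ <;> intro x <;> grind

variable [Fintype A] [DecidableEq A] [DecidableEq B]

lemma sum_card_filter_snd_eq_sum_card_filter_fst (E' : Finset (A × B)) (B' : Finset B) :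
    ∑ b ∈ B', #{e ∈ E' | e.2 = b} = ∑ a : A, #{e ∈ E' | e.1 = a ∧ e.2 ∈ B'} := by
  rw [sum_card_fiberwise_eq_card_filter, ← filter_true_of_mem (s := {e ∈ E' | e.2 ∈ B'})
    (fun e _ => mem_univ e.1), ← sum_card_fiberwise_eq_card_filter]
  simp only [filter_filter, and_comm]

variable [Fintype B]

lemma card_mul_eq_card_mul_of_biregular {E : Finset (A × B)} {dA dB : ℕ}
    (hregA : ∀ a : A, #{e ∈ E | e.1 = a} = dA) (hregB : ∀ b : B, #{e ∈ E | e.2 = b} = dB) :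
    dA * Fintype.card A = dB * Fintype.card B := by
  have hA := sum_card_fiberwise_eq_card_filter E univ Prod.fst
  have hB := sum_card_fiberwise_eq_card_filter E univ Prod.snd
  simp only [hregA, hregB, sum_const, card_univ, smul_eq_mul, mem_univ, filter_true] at hA hB
  linarith

noncomputable def biregularDeviation (E : Finset (A × B)) (dA dB : ℕ) : Matrix A B ℝ :=
  Matrix.of fun a b =>
    (if (a, b) ∈ E then 1 / √(dA * dB) else 0) - 1 / √(Fintype.card A * Fintype.card B)

lemma lambdaBip_eq_norm_biregularDeviation (E : Finset (A × B)) (dA dB : ℕ) :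
    lambdaBip E dA dB = ‖biregularDeviation E dA dB‖ := rfl

lemma biregularDeviation_mulVec_indicator (E : Finset (A × B)) (dA dB : ℕ) (B' : Finset B)
    (a : A) :
    (biregularDeviation E dA dB *ᵥ fun b => if b ∈ B' then 1 else 0) a =
      #{e ∈ E | e.1 = a ∧ e.2 ∈ B'} / √(dA * dB) -
        #B' / √(Fintype.card A * Fintype.card B) := by
  simp only [mulVec, dotProduct, mul_ite, mul_one, mul_zero, sum_ite_mem, univ_inter,
    biregularDeviation, of_apply, sum_sub_distrib, sum_const, card_filter_fst_eq_and_snd_mem,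
    ← sum_filter, nsmul_eq_mul]
  ring

lemma dotProduct_biregularDeviation_mulVec_indicator (E : Finset (A × B)) (dA dB : ℕ)
    (B' : Finset B) (f : A → ℝ) :
    f ⬝ᵥ (biregularDeviation E dA dB *ᵥ fun b => if b ∈ B' then 1 else 0) =
      (∑ a, f a * #{e ∈ E | e.1 = a ∧ e.2 ∈ B'}) / √(dA * dB) -
        #B' * (∑ a, f a) / √(Fintype.card A * Fintype.card B) := by
  simp only [dotProduct, biregularDeviation_mulVec_indicator, mul_sub, sum_sub_distrib,
    sum_div, mul_sum]
  congr 1 <;> refine sum_congr rfl fun a _ => by ring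

end Bipartite

/-- Sampling in bi-regular bipartite inclusion graphs: for every nonempty
`B' ⊆ B` of density `μ` and every `E' ⊆ E`, `|p₁ − p₂| ≤ λ(G)/√μ`, where `p₁` is the
probability of `E'` when `b` is uniform in `B'` and `a` uniform among its neighbors, and `p₂`
is the average over uniform `a ∈ A` of the fraction of `b ∈ N(a) ∩ B'` with `(a,b) ∈ E'`. -/
theorem biregular_edge_sampling {A B : Type} [Fintype A] [Fintype B]
    [DecidableEq A] [DecidableEq B] [Nonempty A] [Nonempty B]
    (E : Finset (A × B)) (dA dB : ℕ) (hdA : 0 < dA) (hdB : 0 < dB)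
    (hregA : ∀ a : A, (E.filter (fun e => e.1 = a)).card = dA)
    (hregB : ∀ b : B, (E.filter (fun e => e.2 = b)).card = dB)
    (E' : Finset (A × B)) (hE' : E' ⊆ E)
    (B' : Finset B) (hB' : B'.Nonempty) :
    |(∑ b ∈ B', ((E'.filter (fun e => e.2 = b)).card : ℝ) / (dB : ℝ)) / (B'.card : ℝ) -
        (∑ a : A, ((E'.filter (fun e => e.1 = a ∧ e.2 ∈ B')).card : ℝ) /
          ((E.filter (fun e => e.1 = a ∧ e.2 ∈ B')).card : ℝ)) / (Fintype.card A : ℝ)| ≤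
      lambdaBip E dA dB / Real.sqrt ((B'.card : ℝ) / (Fintype.card B : ℝ)) := by
  set f : A → ℝ := fun a =>
    (#{e ∈ E' | e.1 = a ∧ e.2 ∈ B'} : ℝ) / #{e ∈ E | e.1 = a ∧ e.2 ∈ B'}
  have hrow (a : A) : #{e ∈ E' | e.1 = a ∧ e.2 ∈ B'} ≤ #{e ∈ E | e.1 = a ∧ e.2 ∈ B'} :=
    card_le_card (filter_subset_filter _ hE')
  have hf (a : A) : f a * #{e ∈ E | e.1 = a ∧ e.2 ∈ B'} = #{e ∈ E' | e.1 = a ∧ e.2 ∈ B'} :=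
    div_mul_cancel_of_imp fun h => by
      rw [Nat.cast_eq_zero] at h ⊢
      exact Nat.eq_zero_of_le_zero (h ▸ hrow a)
  have hf_abs (a : A) : |f a| ≤ 1 := by
    rw [abs_of_nonneg (by positivity)]
    exact div_le_one_of_le₀ (by exact_mod_cast hrow a) (Nat.cast_nonneg _)
  have hcount : (dA * Fintype.card A : ℝ) = dB * Fintype.card B := by
    exact_mod_cast card_mul_eq_card_mul_of_biregular hregA hregB
  have hk : (0 : ℝ) < #B' := by exact_mod_cast hB'.card_pos
  have hgap := sub_eq_mul_of_biregular (S := ∑ a, f a * #{e ∈ E | e.1 = a ∧ e.2 ∈ B'})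
    (F := ∑ a, f a) (k := #B') (by positivity) (by positivity) hk.ne' (by positivity)
    (by positivity) hcount
  rw [← dotProduct_biregularDeviation_mulVec_indicator] at hgap
  rw [← sum_div, ← Nat.cast_sum, sum_card_filter_snd_eq_sum_card_filter_fst, Nat.cast_sum]
  simp only [← hf]
  rw [hgap, abs_mul, abs_of_pos (by positivity), lambdaBip_eq_norm_biregularDeviation,
    ← mul_sqrt_div_eq_div_sqrt_div (nA := Fintype.card A) (by positivity) (by positivity) hk,
    ← norm_toLp_indicator]
  gcongr
  grw [abs_dotProduct_mulVec_le, norm_toLp_le_sqrt_card f hf_abs]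
end

section
/- Let (x, σ) be an excellent pair and let f : F_q^n → F_q be any function such that for every point y with 𝒞_{x,σ} ∩ 𝒞_y ≠ ∅, f(y) is a most frequent value among the values T(C)(y) over C ∈ 𝒞_{x,σ} ∩ 𝒞_y. Then, for C uniform in 𝒞_{x,σ} and y uniform in C, Pr[f(y) = T(C)(y)] ≥ 1 − γ. -/
open MvPolynomial

/-- A cube: a 3-dimensional affine subspace of `F^n`. -/
def IsCube (F : Type) [Field F] [Fintype F] (n : ℕ) (C : AffineSubspace F (Fin n → F)) : Prop :=
  (C : Set (Fin n → F)).Nonempty ∧ Module.finrank F C.direction = 3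

/-- A line: a 1-dimensional affine subspace of `F^n`. -/
def IsLine (F : Type) [Field F] [Fintype F] (n : ℕ) (ℓ : AffineSubspace F (Fin n → F)) : Prop :=
  (ℓ : Set (Fin n → F)).Nonempty ∧ Module.finrank F ℓ.direction = 1

/-- `𝒞_x`: cubes containing the point `x`. -/
def cubesOn (F : Type) [Field F] [Fintype F] (n : ℕ) (x : Fin n → F) :
    Set (AffineSubspace F (Fin n → F)) :=
  {C | IsCube F n C ∧ x ∈ C}

/-- `𝒞_{x,y}`: cubes containing the points `x` and `y`. -/
def cubesOn2 (F : Type) [Field F] [Fintype F] (n : ℕ) (x y : Fin n → F) :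
    Set (AffineSubspace F (Fin n → F)) :=
  {C | IsCube F n C ∧ x ∈ C ∧ y ∈ C}

/-- `𝒞_{x,σ}`: cubes containing `x` on which the table `T` gives `x` the value `σ`. -/
def cubesVal (F : Type) [Field F] [Fintype F] (n : ℕ)
    (T : AffineSubspace F (Fin n → F) → (Fin n → F) → F) (x : Fin n → F) (σ : F) :
    Set (AffineSubspace F (Fin n → F)) :=
  {C | IsCube F n C ∧ x ∈ C ∧ T C x = σ}

/-- `μ_x(A)`: measure of `A` relative to all cubes containing `x`. -/
noncomputable def muX (F : Type) [Field F] [Fintype F] (n : ℕ) (x : Fin n → F)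
    (A : Set (AffineSubspace F (Fin n → F))) : ℝ :=
  (A.ncard : ℝ) / ((cubesOn F n x).ncard : ℝ)

/-- `μ_{x,y}(A)`: measure of `A` relative to all cubes containing `x` and `y`. -/
noncomputable def muXY (F : Type) [Field F] [Fintype F] (n : ℕ) (x y : Fin n → F)
    (A : Set (AffineSubspace F (Fin n → F))) : ℝ :=
  (A.ncard : ℝ) / ((cubesOn2 F n x y).ncard : ℝ)

/-- Two cubes intersecting in a plane (a 2-dimensional affine subspace). -/
def PlanePair (F : Type) [Field F] [Fintype F] (n : ℕ)
    (C₁ C₂ : AffineSubspace F (Fin n → F)) : Prop :=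
  IsCube F n C₁ ∧ IsCube F n C₂ ∧
    ((C₁ ⊓ C₂ : AffineSubspace F (Fin n → F)) : Set (Fin n → F)).Nonempty ∧
    Module.finrank F (C₁ ⊓ C₂ : AffineSubspace F (Fin n → F)).direction = 2

/-- `T(C₁)` and `T(C₂)` agree on `C₁ ∩ C₂`. -/
def Agrees (F : Type) [Field F] [Fintype F] (n : ℕ)
    (T : AffineSubspace F (Fin n → F) → (Fin n → F) → F)
    (C₁ C₂ : AffineSubspace F (Fin n → F)) : Prop :=
  ∀ z : Fin n → F, z ∈ C₁ → z ∈ C₂ → T C₁ z = T C₂ z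

/-- `ε(T)`: the acceptance probability of the cube versus cube test. -/
noncomputable def epsT (F : Type) [Field F] [Fintype F] (n : ℕ)
    (T : AffineSubspace F (Fin n → F) → (Fin n → F) → F) : ℝ :=
  (({p : AffineSubspace F (Fin n → F) × AffineSubspace F (Fin n → F) |
      PlanePair F n p.1 p.2 ∧ Agrees F n T p.1 p.2}).ncard : ℝ) /
  (({p : AffineSubspace F (Fin n → F) × AffineSubspace F (Fin n → F) |
      PlanePair F n p.1 p.2}).ncard : ℝ)

/-- A degree-`d` cubes table: each entry is the restriction to `C` of a polynomial of total
degree at most `d`. -/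
def DegTable (F : Type) [Field F] [Fintype F] (n d : ℕ)
    (T : AffineSubspace F (Fin n → F) → (Fin n → F) → F) : Prop :=
  ∀ C : AffineSubspace F (Fin n → F), IsCube F n C →
    ∃ p : MvPolynomial (Fin n) F, p.totalDegree ≤ d ∧ ∀ z ∈ C, T C z = eval z p

/-- `γ = 1/(1000 d³)`. -/
noncomputable def gam (d : ℕ) : ℝ := 1 / (1000 * (d : ℝ) ^ 3)

/-- `T(C₁)` and `T(C₂)` agree on the line `ℓ`. -/
def LineAgree (F : Type) [Field F] [Fintype F] (n : ℕ)
    (T : AffineSubspace F (Fin n → F) → (Fin n → F) → F)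
    (C₁ C₂ ℓ : AffineSubspace F (Fin n → F)) : Prop :=
  ∀ z : Fin n → F, z ∈ ℓ → T C₁ z = T C₂ z

/-- An excellent pair `(x, σ)`: (i) `μ_x(𝒞_{x,σ}) ≥ ε/5`, and (ii) picking `C₁` uniform in
`𝒞_{x,σ}`, a uniform line `ℓ` with `x ∈ ℓ ⊆ C₁`, and `C₂` uniform in `{C ∈ 𝒞_{x,σ} : ℓ ⊆ C}`,
the probability that `T(C₁)|_ℓ ≠ T(C₂)|_ℓ` is at most `γ`.  (The probability is written as the
sum over the uniformly weighted pairs `(C₁, ℓ)` of the conditional probability over `C₂`,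
compared against `γ` times the number of pairs `(C₁, ℓ)`.) -/
def Excellent (F : Type) [Field F] [Fintype F] (n : ℕ)
    (T : AffineSubspace F (Fin n → F) → (Fin n → F) → F)
    (d : ℕ) (ε : ℝ) (x : Fin n → F) (σ : F) : Prop :=
  ε / 5 ≤ muX F n x (cubesVal F n T x σ) ∧
  (∑ᶠ C₁ ∈ cubesVal F n T x σ,
      ∑ᶠ ℓ ∈ {ℓ : AffineSubspace F (Fin n → F) | IsLine F n ℓ ∧ x ∈ ℓ ∧ ℓ ≤ C₁},
        (({C₂ ∈ cubesVal F n T x σ | ℓ ≤ C₂ ∧ ¬ LineAgree F n T C₁ C₂ ℓ}.ncard : ℝ) /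
          ({C₂ ∈ cubesVal F n T x σ | ℓ ≤ C₂}.ncard : ℝ)))
    ≤ gam d * (({p : AffineSubspace F (Fin n → F) × AffineSubspace F (Fin n → F) |
        p.1 ∈ cubesVal F n T x σ ∧ IsLine F n p.2 ∧ x ∈ p.2 ∧ p.2 ≤ p.1}).ncard : ℝ)

/-!
Every point `y ≠ x` of a cube `C ∋ x` lies on exactly one line through `x` inside `C`, and the
cubes of `𝒞_{x,σ}` through `y` are exactly those containing the line `xy`. As `f y` is a plurality
value of `T(·)(y)` on these cubes, the fraction of them with `T(C)(y) ≠ f y` is at most the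
probability that two of them disagree at `y`, hence on the line `xy`; summed over the `q - 1`
points `y ≠ x` of each line, this is controlled by condition (ii). So a random `C ∈ 𝒞_{x,σ}` has
on average at most `γ (q³ - 1)` points `y ≠ x` with `f y ≠ T(C)(y)`, while `f x = σ = T(C)(x)`.
-/

open Finset

theorem Finset.card_filter_ne_mul_card_le_sum {α β : Type*} [DecidableEq β] (s : Finset α)
    (g : α → β) {v : β} (hv : ∀ w, #{a ∈ s | g a = w} ≤ #{a ∈ s | g a = v}) :
    #{a ∈ s | g a ≠ v} * #s ≤ ∑ a ∈ s, #{b ∈ s | g b ≠ g a} := by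
  have hcompl (w : β) : #{b ∈ s | g b ≠ w} = #s - #{b ∈ s | g b = w} := by
    rw [← card_filter_add_card_filter_not (s := s) (p := fun b => g b = w)]
    simp only [ne_eq, Nat.add_sub_cancel_left]
  calc #{a ∈ s | g a ≠ v} * #s = ∑ _a ∈ s, #{b ∈ s | g b ≠ v} := by
        rw [sum_const, smul_eq_mul, mul_comm]
    _ ≤ ∑ a ∈ s, #{b ∈ s | g b ≠ g a} :=
        sum_le_sum fun a _ => by rw [hcompl, hcompl]; exact Nat.sub_le_sub_left (hv (g a)) _

theorem Set.ncard_setOf_fst_mem_snd_mem {α β : Type*} [Finite α] [Finite β] (s : Set α)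
    (t : α → Set β) :
    {p : α × β | p.1 ∈ s ∧ p.2 ∈ t p.1}.ncard = ∑ᶠ a ∈ s, (t a).ncard := by
  classical
  have := Fintype.ofFinite α
  have := Fintype.ofFinite β
  simp only [finsum_mem_eq_toFinset_sum, Set.ncard_eq_toFinset_card']
  rw [card_eq_sum_card_fiberwise (f := Prod.fst) (t := s.toFinset) fun p hp => by simp_all]
  refine sum_congr rfl fun a ha => card_bij (fun p _ => p.2) ?_ ?_ ?_
  · simp only [mem_filter, Set.mem_toFinset, Set.mem_ofPred_eq]
    rintro ⟨a, b⟩ ⟨⟨-, hb⟩, rfl⟩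
    exact hb
  · simp +contextual [Prod.ext_iff]
  · simp_all

noncomputable instance AffineSubspace.instFintype {k V P : Type*} [Ring k] [AddCommGroup V]
    [Module k V] [AddTorsor V P] [Finite P] : Fintype (AffineSubspace k P) :=
  have : Finite (AffineSubspace k P) := Finite.of_injective _ SetLike.coe_injective
  Fintype.ofFinite _

theorem AffineSubspace.ncard_eq_pow_finrank {k V P : Type*} [Field k] [AddCommGroup V]
    [Module k V] [AddTorsor V P] [FiniteDimensional k V] (S : AffineSubspace k P)
    (hS : (S : Set P).Nonempty) :
    (S : Set P).ncard = Nat.card k ^ Module.finrank k S.direction := by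
  obtain ⟨p, hp⟩ := hS
  have : Nonempty S := ⟨⟨p, hp⟩⟩
  rw [← Module.natCard_eq_pow_finrank, ← Nat.card_coe_set_eq]
  exact (Nat.card_congr (Equiv.vaddConst (⟨p, hp⟩ : S))).symm

section Lines

variable {F : Type} [Field F] [Fintype F] {n : ℕ}

theorem IsCube.ncard_eq {C : AffineSubspace F (Fin n → F)} (hC : IsCube F n C) :
    (C : Set (Fin n → F)).ncard = Fintype.card F ^ 3 := by
  rw [C.ncard_eq_pow_finrank hC.1, hC.2, Nat.card_eq_fintype_card]

theorem IsLine.ncard_eq {ℓ : AffineSubspace F (Fin n → F)} (hℓ : IsLine F n ℓ) :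
    (ℓ : Set (Fin n → F)).ncard = Fintype.card F := by
  rw [ℓ.ncard_eq_pow_finrank hℓ.1, hℓ.2, Nat.card_eq_fintype_card, pow_one]

theorem isLine_affineSpan_pair {x y : Fin n → F} (hxy : x ≠ y) :
    IsLine F n (affineSpan F {x, y}) := by
  refine ⟨⟨x, left_mem_affineSpan_pair F x y⟩, ?_⟩
  rw [direction_affineSpan, vectorSpan_pair]
  exact finrank_span_singleton (vsub_ne_zero.2 hxy)

theorem IsLine.eq_affineSpan_pair {ℓ : AffineSubspace F (Fin n → F)} (hℓ : IsLine F n ℓ)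
    {x y : Fin n → F} (hx : x ∈ ℓ) (hy : y ∈ ℓ) (hxy : x ≠ y) :
    ℓ = affineSpan F {x, y} := by
  have hle : affineSpan F {x, y} ≤ ℓ := affineSpan_pair_le_of_mem_of_mem hx hy
  refine (AffineSubspace.ext_of_direction_eq ?_ ⟨x, left_mem_affineSpan_pair F x y, hx⟩).symm
  exact Submodule.eq_of_le_of_finrank_eq (AffineSubspace.direction_le hle)
    (by rw [hℓ.2, (isLine_affineSpan_pair hxy).2])

theorem IsLine.le_iff_mem {ℓ C : AffineSubspace F (Fin n → F)} (hℓ : IsLine F n ℓ)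
    {x y : Fin n → F} (hx : x ∈ ℓ) (hy : y ∈ ℓ) (hxy : x ≠ y) (hxC : x ∈ C) :
    ℓ ≤ C ↔ y ∈ C := by
  refine ⟨fun h => h hy, fun hyC => ?_⟩
  rw [hℓ.eq_affineSpan_pair hx hy hxy]
  exact affineSpan_pair_le_of_mem_of_mem hxC hyC

def linesThrough (x : Fin n → F) (C : AffineSubspace F (Fin n → F)) :
    Set (AffineSubspace F (Fin n → F)) :=
  {ℓ | IsLine F n ℓ ∧ x ∈ ℓ ∧ ℓ ≤ C}

open Classical in
theorem sum_erase_eq_sum_linesThrough {M : Type*} [AddCommMonoid M]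
    {x : Fin n → F} {C : AffineSubspace F (Fin n → F)} (hx : x ∈ C) (g : (Fin n → F) → M) :
    ∑ y ∈ (C : Set (Fin n → F)).toFinset.erase x, g y =
      ∑ ℓ ∈ (linesThrough x C).toFinset, ∑ y ∈ (ℓ : Set (Fin n → F)).toFinset.erase x, g y := by
  rw [← sum_fiberwise_of_maps_to (g := fun y => affineSpan F {x, y})
    (t := (linesThrough x C).toFinset)]
  · refine sum_congr rfl fun ℓ hℓ => sum_congr ?_ fun _ _ => rfl
    obtain ⟨hℓ, hxℓ, hℓC⟩ := Set.mem_toFinset.1 hℓ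
    ext y
    simp only [mem_filter, mem_erase, Set.mem_toFinset, SetLike.mem_coe]
    constructor
    · rintro ⟨⟨hyx, -⟩, rfl⟩
      exact ⟨hyx, right_mem_affineSpan_pair F x y⟩
    · rintro ⟨hyx, hyℓ⟩
      exact ⟨⟨hyx, hℓC hyℓ⟩, (hℓ.eq_affineSpan_pair hxℓ hyℓ (Ne.symm hyx)).symm⟩
  · intro y hy
    obtain ⟨hyx, hyC⟩ := mem_erase.1 hy
    exact Set.mem_toFinset.2 ⟨isLine_affineSpan_pair (Ne.symm hyx),
      left_mem_affineSpan_pair F x y, affineSpan_pair_le_of_mem_of_mem hx (by simpa using hyC)⟩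

theorem IsCube.ncard_linesThrough_mul {x : Fin n → F} {C : AffineSubspace F (Fin n → F)}
    (hC : IsCube F n C) (hx : x ∈ C) :
    ((linesThrough x C).ncard : ℝ) * (Fintype.card F - 1) = Fintype.card F ^ 3 - 1 := by
  classical
  have h := sum_erase_eq_sum_linesThrough hx (fun _ => (1 : ℝ))
  have hcard {S : AffineSubspace F (Fin n → F)} (hxS : x ∈ S) :
      (#((S : Set (Fin n → F)).toFinset.erase x) : ℝ) = (S : Set (Fin n → F)).ncard - 1 := by
    rw [card_erase_of_mem (Set.mem_toFinset.2 hxS), ← Set.ncard_eq_toFinset_card',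
      Nat.cast_sub ((Set.ncard_pos).2 ⟨x, hxS⟩), Nat.cast_one]
  simp only [sum_const, nsmul_eq_mul, mul_one] at h
  rw [hcard hx, hC.ncard_eq, sum_congr rfl fun ℓ hℓ => by
    rw [hcard (Set.mem_toFinset.1 hℓ).2.1, (Set.mem_toFinset.1 hℓ).1.ncard_eq]] at h
  rw [Set.ncard_eq_toFinset_card', ← nsmul_eq_mul, ← sum_const]
  push_cast at h ⊢
  exact h.symm

end Lines

section Plurality

variable {F : Type} [Field F] [Fintype F] {n : ℕ}
  {T : AffineSubspace F (Fin n → F) → (Fin n → F) → F} {x : Fin n → F} {σ : F}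
  {f : (Fin n → F) → F}

open Classical

def IsPlurality (T : AffineSubspace F (Fin n → F) → (Fin n → F) → F) (x : Fin n → F) (σ : F)
    (f : (Fin n → F) → F) : Prop :=
  ∀ y : Fin n → F, (cubesVal F n T x σ ∩ cubesOn F n y).Nonempty → ∀ v : F,
    {C ∈ cubesVal F n T x σ ∩ cubesOn F n y | T C y = v}.ncard ≤
      {C ∈ cubesVal F n T x σ ∩ cubesOn F n y | T C y = f y}.ncard

/-- The conditional probability inside condition (ii) of `Excellent`. -/
noncomputable def lineDisagreement (T : AffineSubspace F (Fin n → F) → (Fin n → F) → F)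
    (x : Fin n → F) (σ : F) (C₁ ℓ : AffineSubspace F (Fin n → F)) : ℝ :=
  ({C₂ ∈ cubesVal F n T x σ | ℓ ≤ C₂ ∧ ¬ LineAgree F n T C₁ C₂ ℓ}.ncard : ℝ) /
    ({C₂ ∈ cubesVal F n T x σ | ℓ ≤ C₂}.ncard : ℝ)

theorem lineDisagreement_eq (C₁ ℓ : AffineSubspace F (Fin n → F)) :
    lineDisagreement T x σ C₁ ℓ =
      (#{C₂ ∈ {C ∈ (cubesVal F n T x σ).toFinset | ℓ ≤ C} | ¬ LineAgree F n T C₁ C₂ ℓ} : ℝ) /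
        #{C ∈ (cubesVal F n T x σ).toFinset | ℓ ≤ C} := by
  simp only [lineDisagreement, Set.ncard_eq_toFinset_card']
  congr 3 <;> ext C <;> simp +contextual [and_assoc]

theorem IsPlurality.apply_self (hf : IsPlurality T x σ f) (hS : (cubesVal F n T x σ).Nonempty) :
    f x = σ := by
  obtain ⟨C₀, hC₀⟩ := hS
  have hx : cubesVal F n T x σ ∩ cubesOn F n x = cubesVal F n T x σ :=
    Set.inter_eq_left.2 fun C hC => ⟨hC.1, hC.2.1⟩
  have hσ := hf x (by rw [hx]; exact ⟨C₀, hC₀⟩) σ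
  have hall : {C ∈ cubesVal F n T x σ | T C x = σ} = cubesVal F n T x σ :=
    Set.sep_eq_self_iff_mem_true.2 fun C hC => hC.2.2
  rw [hx, hall] at hσ
  obtain ⟨C, ⟨hC, hCf⟩⟩ : {C ∈ cubesVal F n T x σ | T C x = f x}.Nonempty := by
    rw [← Set.ncard_pos]
    exact lt_of_lt_of_le ((Set.ncard_pos).2 ⟨C₀, hC₀⟩) hσ
  rw [← hCf, hC.2.2]

theorem IsPlurality.card_filter_ne_le (hf : IsPlurality T x σ f)
    {ℓ : AffineSubspace F (Fin n → F)} (hℓ : IsLine F n ℓ) {y : Fin n → F} (hxℓ : x ∈ ℓ)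
    (hyℓ : y ∈ ℓ) (hxy : x ≠ y) :
    (#{C ∈ {C ∈ (cubesVal F n T x σ).toFinset | ℓ ≤ C} | T C y ≠ f y} : ℝ) ≤
      ∑ C₁ ∈ {C ∈ (cubesVal F n T x σ).toFinset | ℓ ≤ C}, lineDisagreement T x σ C₁ ℓ := by
  set Sℓ := {C ∈ (cubesVal F n T x σ).toFinset | ℓ ≤ C}
  have hSℓ (v : F) : {C ∈ cubesVal F n T x σ ∩ cubesOn F n y | T C y = v}.ncard =
      #{C ∈ Sℓ | T C y = v} := by
    rw [Set.ncard_eq_toFinset_card']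
    congr 1
    ext C
    simp only [Set.mem_toFinset, Set.mem_ofPred_eq, mem_filter, Sℓ]
    constructor
    · rintro ⟨⟨hC, -, hyC⟩, hv⟩
      exact ⟨⟨hC, (hℓ.le_iff_mem hxℓ hyℓ hxy hC.2.1).2 hyC⟩, hv⟩
    · rintro ⟨⟨hC, hℓC⟩, hv⟩
      exact ⟨⟨hC, hC.1, hℓC hyℓ⟩, hv⟩
  rcases Sℓ.eq_empty_or_nonempty with hempty | ⟨C₀, hC₀⟩
  · simp [hempty]
  have hcovered : (cubesVal F n T x σ ∩ cubesOn F n y).Nonempty := by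
    obtain ⟨hC₀, hℓC₀⟩ := mem_filter.1 hC₀
    exact ⟨C₀, Set.mem_toFinset.1 hC₀, (Set.mem_toFinset.1 hC₀).1, hℓC₀ hyℓ⟩
  have hmode := Sℓ.card_filter_ne_mul_card_le_sum (fun C => T C y) (v := f y)
    fun w => by rw [← hSℓ, ← hSℓ]; exact hf y hcovered w
  have hpos : (0 : ℝ) < #Sℓ := by exact_mod_cast card_pos.2 ⟨C₀, hC₀⟩
  simp only [lineDisagreement_eq, ← sum_div]
  rw [le_div_iff₀ hpos]
  calc (#{C ∈ Sℓ | T C y ≠ f y} : ℝ) * #Sℓ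
        ≤ ∑ C₁ ∈ Sℓ, (#{C₂ ∈ Sℓ | T C₂ y ≠ T C₁ y} : ℝ) := by exact_mod_cast hmode
    _ ≤ ∑ C₁ ∈ Sℓ, (#{C₂ ∈ Sℓ | ¬ LineAgree F n T C₁ C₂ ℓ} : ℝ) := by
        gcongr with C₁ _ C₂ _
        exact fun hagree => (hagree y hyℓ).symm

theorem IsPlurality.sum_card_filter_line_le (hf : IsPlurality T x σ f)
    {ℓ : AffineSubspace F (Fin n → F)} (hℓ : IsLine F n ℓ) (hxℓ : x ∈ ℓ) :
    ∑ C ∈ {C ∈ (cubesVal F n T x σ).toFinset | ℓ ≤ C},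
        (#{y ∈ (ℓ : Set (Fin n → F)).toFinset.erase x | T C y ≠ f y} : ℝ) ≤
      (Fintype.card F - 1) *
        ∑ C₁ ∈ {C ∈ (cubesVal F n T x σ).toFinset | ℓ ≤ C}, lineDisagreement T x σ C₁ ℓ := by
  set Sℓ := {C ∈ (cubesVal F n T x σ).toFinset | ℓ ≤ C}
  set E := (ℓ : Set (Fin n → F)).toFinset.erase x
  have hE : (#E : ℝ) = Fintype.card F - 1 := by
    rw [card_erase_of_mem (Set.mem_toFinset.2 hxℓ), ← Set.ncard_eq_toFinset_card', hℓ.ncard_eq,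
      Nat.cast_sub Fintype.card_pos, Nat.cast_one]
  calc ∑ C ∈ Sℓ, (#{y ∈ E | T C y ≠ f y} : ℝ) = ∑ y ∈ E, (#{C ∈ Sℓ | T C y ≠ f y} : ℝ) := by
        exact_mod_cast sum_card_bipartiteAbove_eq_sum_card_bipartiteBelow
          (r := fun C y => T C y ≠ f y)
    _ ≤ ∑ _y ∈ E, ∑ C₁ ∈ Sℓ, lineDisagreement T x σ C₁ ℓ := sum_le_sum fun y hy =>
        hf.card_filter_ne_le hℓ hxℓ (Set.mem_toFinset.1 (mem_of_mem_erase hy))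
          (Ne.symm (ne_of_mem_erase hy))
    _ = _ := by rw [sum_const, nsmul_eq_mul, hE]

theorem IsPlurality.sum_card_filter_le (hf : IsPlurality T x σ f) :
    ∑ C ∈ (cubesVal F n T x σ).toFinset,
        (#{y ∈ (C : Set (Fin n → F)).toFinset.erase x | T C y ≠ f y} : ℝ) ≤
      (Fintype.card F - 1) * ∑ C ∈ (cubesVal F n T x σ).toFinset,
        ∑ ℓ ∈ (linesThrough x C).toFinset, lineDisagreement T x σ C ℓ := by
  set S := (cubesVal F n T x σ).toFinset
  set Lx := {ℓ : AffineSubspace F (Fin n → F) | IsLine F n ℓ ∧ x ∈ ℓ}.toFinset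
  have hswap (g : AffineSubspace F (Fin n → F) → AffineSubspace F (Fin n → F) → ℝ) :
      ∑ C ∈ S, ∑ ℓ ∈ (linesThrough x C).toFinset, g C ℓ =
        ∑ ℓ ∈ Lx, ∑ C ∈ {C ∈ S | ℓ ≤ C}, g C ℓ :=
    sum_comm' fun C ℓ => by
      simp only [Lx, S, Set.mem_toFinset, mem_filter]
      simp only [linesThrough, Set.mem_ofPred_eq]
      tauto
  calc ∑ C ∈ S, (#{y ∈ (C : Set (Fin n → F)).toFinset.erase x | T C y ≠ f y} : ℝ)
      = ∑ C ∈ S, ∑ ℓ ∈ (linesThrough x C).toFinset,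
          (#{y ∈ (ℓ : Set (Fin n → F)).toFinset.erase x | T C y ≠ f y} : ℝ) := by
        refine sum_congr rfl fun C hC => ?_
        simp only [← sum_boole]
        exact sum_erase_eq_sum_linesThrough (Set.mem_toFinset.1 hC).2.1 _
    _ = ∑ ℓ ∈ Lx, ∑ C ∈ {C ∈ S | ℓ ≤ C},
          (#{y ∈ (ℓ : Set (Fin n → F)).toFinset.erase x | T C y ≠ f y} : ℝ) := hswap _
    _ ≤ ∑ ℓ ∈ Lx, (Fintype.card F - 1) * ∑ C ∈ {C ∈ S | ℓ ≤ C}, lineDisagreement T x σ C ℓ :=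
        sum_le_sum fun ℓ hℓ => hf.sum_card_filter_line_le (Set.mem_toFinset.1 hℓ).1
          (Set.mem_toFinset.1 hℓ).2
    _ = _ := by rw [← mul_sum, hswap]

theorem Excellent.sum_lineDisagreement_le {d : ℕ} {ε : ℝ} (h : Excellent F n T d ε x σ) :
    ∑ C ∈ (cubesVal F n T x σ).toFinset, ∑ ℓ ∈ (linesThrough x C).toFinset,
        lineDisagreement T x σ C ℓ ≤
      gam d * ∑ C ∈ (cubesVal F n T x σ).toFinset, ((linesThrough x C).ncard : ℝ) := by
  have h2 : ∑ᶠ C ∈ cubesVal F n T x σ, ∑ᶠ ℓ ∈ linesThrough x C, lineDisagreement T x σ C ℓ ≤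
      gam d * ({p : AffineSubspace F (Fin n → F) × AffineSubspace F (Fin n → F) |
        p.1 ∈ cubesVal F n T x σ ∧ p.2 ∈ linesThrough x p.1}.ncard : ℝ) := h.2
  rw [Set.ncard_setOf_fst_mem_snd_mem] at h2
  simpa only [finsum_mem_eq_toFinset_sum, Nat.cast_sum] using h2

theorem Excellent.sum_card_filter_le {d : ℕ} {ε : ℝ} (h : Excellent F n T d ε x σ)
    (hf : IsPlurality T x σ f) :
    ∑ C ∈ (cubesVal F n T x σ).toFinset,
        (#{y ∈ (C : Set (Fin n → F)).toFinset.erase x | T C y ≠ f y} : ℝ) ≤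
      gam d * #(cubesVal F n T x σ).toFinset * (Fintype.card F ^ 3 - 1) := by
  set S := (cubesVal F n T x σ).toFinset
  have hq : (0 : ℝ) ≤ Fintype.card F - 1 :=
    sub_nonneg.2 (by exact_mod_cast Fintype.card_pos)
  calc _ ≤ (Fintype.card F - 1) * ∑ C ∈ S, ∑ ℓ ∈ (linesThrough x C).toFinset,
        lineDisagreement T x σ C ℓ := hf.sum_card_filter_le
    _ ≤ (Fintype.card F - 1) * (gam d * ∑ C ∈ S, ((linesThrough x C).ncard : ℝ)) :=
        mul_le_mul_of_nonneg_left h.sum_lineDisagreement_le hq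
    _ = gam d * ∑ C ∈ S, ((linesThrough x C).ncard : ℝ) * (Fintype.card F - 1) := by
        rw [← sum_mul]
        ring
    _ = _ := by
        rw [sum_congr rfl fun C hC => (Set.mem_toFinset.1 hC).1.ncard_linesThrough_mul
          (Set.mem_toFinset.1 hC).2.1, sum_const, nsmul_eq_mul, mul_assoc]

theorem IsPlurality.ncard_agree_eq (hf : IsPlurality T x σ f) {C : AffineSubspace F (Fin n → F)}
    (hC : C ∈ cubesVal F n T x σ) :
    ({z ∈ (C : Set (Fin n → F)) | f z = T C z}.ncard : ℝ) =
      Fintype.card F ^ 3 - #{y ∈ (C : Set (Fin n → F)).toFinset.erase x | T C y ≠ f y} := by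
  have hfx : T C x = f x := by rw [hC.2.2, hf.apply_self ⟨C, hC⟩]
  have herase : {y ∈ (C : Set (Fin n → F)).toFinset.erase x | T C y ≠ f y} =
      {y ∈ (C : Set (Fin n → F)).toFinset | ¬ f y = T C y} := by
    ext y
    simp only [mem_filter, mem_erase]
    exact ⟨fun h => ⟨h.1.2, Ne.symm h.2⟩, fun h => ⟨⟨by rintro rfl; exact h.2 hfx.symm, h.1⟩,
      Ne.symm h.2⟩⟩
  have hsplit := card_filter_add_card_filter_not (s := (C : Set (Fin n → F)).toFinset)
    (p := fun z => f z = T C z)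
  rw [← Set.ncard_eq_toFinset_card', hC.1.ncard_eq] at hsplit
  have hagree : {z ∈ (C : Set (Fin n → F)) | f z = T C z}.ncard =
      #{z ∈ (C : Set (Fin n → F)).toFinset | f z = T C z} := by
    rw [Set.ncard_eq_toFinset_card']
    congr 1
    ext z
    simp
  rw [herase, eq_sub_iff_add_eq, hagree]
  exact_mod_cast hsplit

end Plurality

theorem plurality_local_agreement_general {F : Type} [Field F] [Fintype F] {n d : ℕ}
    (T : AffineSubspace F (Fin n → F) → (Fin n → F) → F)
    (x : Fin n → F) (σ : F) (hexc : Excellent F n T d (epsT F n T) x σ)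
    (f : (Fin n → F) → F)
    (hf : ∀ y : Fin n → F, (cubesVal F n T x σ ∩ cubesOn F n y).Nonempty → ∀ v : F,
      {C ∈ cubesVal F n T x σ ∩ cubesOn F n y | T C y = v}.ncard ≤
        {C ∈ cubesVal F n T x σ ∩ cubesOn F n y | T C y = f y}.ncard) :
    (1 - gam d) * ((cubesVal F n T x σ).ncard : ℝ) ≤
      ∑ᶠ C ∈ cubesVal F n T x σ,
        (({z ∈ (C : Set (Fin n → F)) | f z = T C z}.ncard : ℝ) /
          ((C : Set (Fin n → F)).ncard : ℝ)) := by
  classical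
  replace hf : IsPlurality T x σ f := hf
  have hq : (0 : ℝ) < Fintype.card F ^ 3 := by positivity
  have hbad := hexc.sum_card_filter_le hf
  have hγ : 0 ≤ gam d * #(cubesVal F n T x σ).toFinset := by unfold gam; positivity
  rw [finsum_mem_eq_toFinset_sum, Set.ncard_eq_toFinset_card', sum_congr rfl fun C hC => by
    rw [hf.ncard_agree_eq (Set.mem_toFinset.1 hC), (Set.mem_toFinset.1 hC).1.ncard_eq,
      Nat.cast_pow]]
  rw [← sum_div, sum_sub_distrib, sum_const, nsmul_eq_mul, le_div_iff₀ hq]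
  linarith [mul_le_mul_of_nonneg_left (sub_le_self ((Fintype.card F : ℝ) ^ 3) zero_le_one) hγ]

/-- For an excellent pair `(x, σ)` and a plurality function `f` (at each point
`y` covered by `𝒞_{x,σ}`, `f(y)` is a most frequent value of `T(C)(y)` over `C ∈ 𝒞_{x,σ} ∩ 𝒞_y`),
picking `C` uniform in `𝒞_{x,σ}` and `y` uniform in `C` gives `f(y) = T(C)(y)` with probability
at least `1 − γ`. -/
theorem plurality_local_agreement {F : Type} [Field F] [Fintype F] {n d : ℕ}
    (hn : 6 ≤ n) (hd : 1 ≤ d)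
    (hq : (11 * d : ℝ) < (Fintype.card F : ℝ) ^ ((1 : ℝ) / 9))
    (T : AffineSubspace F (Fin n → F) → (Fin n → F) → F)
    (hT : DegTable F n d T)
    (hε : 10 ^ 7 * (d : ℝ) ^ 6 / (Fintype.card F : ℝ) ≤ epsT F n T)
    (x : Fin n → F) (σ : F) (hexc : Excellent F n T d (epsT F n T) x σ)
    (f : (Fin n → F) → F)
    (hf : ∀ y : Fin n → F, (cubesVal F n T x σ ∩ cubesOn F n y).Nonempty → ∀ v : F,
      {C ∈ cubesVal F n T x σ ∩ cubesOn F n y | T C y = v}.ncard ≤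
        {C ∈ cubesVal F n T x σ ∩ cubesOn F n y | T C y = f y}.ncard) :
    (1 - gam d) * ((cubesVal F n T x σ).ncard : ℝ) ≤
      ∑ᶠ C ∈ cubesVal F n T x σ,
        (({z ∈ (C : Set (Fin n → F)) | f z = T C z}.ncard : ℝ) /
          ((C : Set (Fin n → F)).ncard : ℝ)) :=
  plurality_local_agreement_general T x σ hexc f hf
end

section
/- Let x ∈ F_q^n with n ≥ 3 and let Y ⊆ F_q^n ∖ {x} be nonempty. For a cube C ∈ 𝒞_x, let z(C) = |C ∩ Y|. Then the variance of z(C), over a uniformly random C ∈ 𝒞_x, is at most 2·(|Y|/q^n)·q⁴. -/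
/-!
Cubes through `x` are the translates `x + W` of the 3-dimensional subspaces `W`, so
`z(x + W) = |W ∩ P|` with `P = Y - x ⊆ V ∖ {0}`. Linear automorphisms act transitively on
linearly independent `m`-tuples, so the number of `k`-dimensional subspaces containing such a
tuple depends only on `m`; double counting against the `∏ i < m, (q^n - q^i)` independent tuples
computes it. Writing `N` for the number of subspaces and `f`, `g` for the counts through one and
two independent vectors, `f / N = (q^k - 1)/(q^n - 1)` and `N g ≤ f²`: the indicators of two
independent points are negatively correlated. Only the at most `q` points of `P` on the line
through a given `p` contribute to the variance, each at most `f / N`, whence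
`Var z ≤ |P| q (q^k - 1)/(q^n - 1) ≤ 2 |P| q⁴ / q^n`.
-/

open MvPolynomial

open Finset Module Submodule

open scoped Classical

section LinearAlgebra

variable {F V : Type*} [Field F] [AddCommGroup V] [Module F V]

theorem LinearIndependent.exists_linearEquiv_comp_eq [FiniteDimensional F V] {ι : Type*}
    {b b' : ι → V} (hb : LinearIndependent F b) (hb' : LinearIndependent F b') :
    ∃ e : V ≃ₗ[F] V, e ∘ b = b' := by
  obtain ⟨C, hC⟩ := (span F (Set.range b)).exists_isCompl
  obtain ⟨C', hC'⟩ := (span F (Set.range b')).exists_isCompl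
  let eSpan := (Basis.span hb).equiv (Basis.span hb') (Equiv.refl ι)
  have hrank : finrank F C = finrank F C' := by
    have := finrank_add_eq_of_isCompl hC
    have := finrank_add_eq_of_isCompl hC'
    have := eSpan.finrank_eq
    omega
  refine ⟨(prodEquivOfIsCompl _ _ hC).symm ≪≫ₗ
    (eSpan.prodCongr (LinearEquiv.ofFinrankEq C C' hrank)) ≪≫ₗ prodEquivOfIsCompl _ _ hC',
    funext fun i => ?_⟩
  have hbi : b i = Basis.span hb i := by simp [Basis.span_apply]
  rw [Function.comp_apply, hbi]
  simp [-Basis.span_apply, eSpan]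
  simp [Basis.span_apply]

theorem card_filter_mem_span_singleton_le [Fintype F] (P : Finset V) (v : V) :
    #{p ∈ P | p ∈ span F {v}} ≤ Fintype.card F :=
  calc #{p ∈ P | p ∈ span F {v}} ≤ #(univ.image fun a : F => a • v) :=
        card_le_card fun p hp => by
          obtain ⟨a, rfl⟩ := mem_span_singleton.1 (mem_filter.1 hp).2
          simp
    _ ≤ Fintype.card F := card_image_le

end LinearAlgebra

instance Submodule.finite {R M : Type*} [Semiring R] [AddCommMonoid M] [Module R M] [Finite M] :
    Finite (Submodule R M) :=
  Finite.of_injective _ SetLike.coe_injective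

noncomputable instance Submodule.fintype {R M : Type*} [Semiring R] [AddCommMonoid M] [Module R M]
    [Finite M] : Fintype (Submodule R M) :=
  Fintype.ofFinite _

theorem pow_sub_mul_pow_sub_le {q k n : ℕ} (hq : 1 ≤ q) (hkn : k ≤ n) :
    (q ^ k - q) * (q ^ n - 1) ≤ (q ^ k - 1) * (q ^ n - q) := by
  rcases Nat.eq_zero_or_pos k with rfl | hk
  · simp [Nat.sub_eq_zero_of_le hq]
  have h1 : q ≤ q ^ k := Nat.le_self_pow hk.ne' q
  have h2 : q ^ k ≤ q ^ n := Nat.pow_le_pow_right hq hkn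
  zify [h1, h1.trans h2, Nat.one_le_pow k q hq, Nat.one_le_pow n q hq]
  nlinarith [mul_le_mul_of_nonneg_left (Int.ofNat_le.2 h2) (by omega : (0 : ℤ) ≤ q - 1)]

theorem Finset.sum_card_filter_sq {ι α : Type*} (S : Finset ι) (P : Finset α) (r : α → ι → Prop)
    [∀ a i, Decidable (r a i)] :
    ∑ i ∈ S, #{a ∈ P | r a i} ^ 2 = ∑ a ∈ P, ∑ b ∈ P, #{i ∈ S | r a i ∧ r b i} := by
  calc ∑ i ∈ S, #{a ∈ P | r a i} ^ 2 = ∑ i ∈ S, #{x ∈ P ×ˢ P | r x.1 i ∧ r x.2 i} :=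
        sum_congr rfl fun i _ => by
          rw [sq, ← card_product, ← filter_product (fun a => r a i) (fun a => r a i)]
    _ = ∑ x ∈ P ×ˢ P, #{i ∈ S | r x.1 i ∧ r x.2 i} :=
        (sum_card_bipartiteAbove_eq_sum_card_bipartiteBelow _).symm
    _ = ∑ a ∈ P, ∑ b ∈ P, #{i ∈ S | r a i ∧ r b i} := sum_product _ _ _

theorem div_sub_div_sq_le {N A B D : ℝ} (hN : 0 < N) (h : N * A ≤ B ^ 2 + D) :
    A / N - (B / N) ^ 2 ≤ D / N ^ 2 := by
  have hvar : A / N - (B / N) ^ 2 = (N * A - B ^ 2) / N ^ 2 := by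
    field_simp
  rw [hvar]
  exact div_le_div_of_nonneg_right (by linarith) (by positivity)

theorem mul_mul_pow_three_sub_one_div_le {y q t : ℝ} (hy : 0 ≤ y) (hq : 1 ≤ q) (ht : 2 ≤ t) :
    y * q * (q ^ 3 - 1) / (t - 1) ≤ 2 * (y / t) * q ^ 4 := by
  rw [show 2 * (y / t) * q ^ 4 = 2 * y * q ^ 4 / t by ring,
    div_le_div_iff₀ (by linarith) (by linarith)]
  have hq4 : q * (q ^ 3 - 1) ≤ q ^ 4 := by nlinarith
  nlinarith [mul_le_mul_of_nonneg_left hq4 (mul_nonneg hy (by linarith : (0 : ℝ) ≤ t)),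
    mul_nonneg (mul_nonneg hy (pow_nonneg (by linarith : (0 : ℝ) ≤ q) 4))
      (by linarith : (0 : ℝ) ≤ t - 2)]

section Counting

variable {F V : Type*} [Field F] [AddCommGroup V] [Module F V] [Fintype V] {k : ℕ}

local notation "q" => Fintype.card F

variable (F V) in
noncomputable def subspacesOfRank (k : ℕ) : Finset (Submodule F V) := {W | finrank F W = k}

variable (F) in
noncomputable def numSubspacesContaining (k : ℕ) {ι : Type*} (b : ι → V) : ℕ :=
  #{W ∈ subspacesOfRank F V k | ∀ i, b i ∈ W}

theorem subspacesOfRank_nonempty (hk : k ≤ finrank F V) : (subspacesOfRank F V k).Nonempty := by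
  have hb := (finBasis F V).linearIndependent.comp _ (Fin.castLE_injective hk)
  exact ⟨span F (Set.range (finBasis F V ∘ Fin.castLE hk)), by
    simp [subspacesOfRank, finrank_span_eq_card hb]⟩

theorem numSubspacesContaining_linearEquiv_comp {ι : Type*} (e : V ≃ₗ[F] V) (b : ι → V) :
    numSubspacesContaining F k (e ∘ b) = numSubspacesContaining F k b := by
  refine card_nbij' (fun W => W.map e.symm.toLinearMap) (fun W => W.map e.toLinearMap)
    ?_ ?_ ?_ ?_ <;> intro W hW
  · simp_all [subspacesOfRank, LinearEquiv.finrank_map_eq]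
  · simp_all [subspacesOfRank, LinearEquiv.finrank_map_eq]
  all_goals dsimp only; rw [← map_comp]; simp

theorem numSubspacesContaining_eq_of_linearIndependent {ι : Type*} {b b' : ι → V}
    (hb : LinearIndependent F b) (hb' : LinearIndependent F b') :
    numSubspacesContaining F k b = numSubspacesContaining F k b' := by
  obtain ⟨e, rfl⟩ := hb.exists_linearEquiv_comp_eq hb'
  exact (numSubspacesContaining_linearEquiv_comp e b).symm

theorem numSubspacesContaining_singleton_eq {v w : V} (hv : v ≠ 0) (hw : w ≠ 0) :
    numSubspacesContaining F k ![v] = numSubspacesContaining F k ![w] :=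
  numSubspacesContaining_eq_of_linearIndependent (linearIndependent_unique_iff.2 hv)
    (linearIndependent_unique_iff.2 hw)

theorem numSubspacesContaining_pair_le (v w : V) :
    numSubspacesContaining F k ![v, w] ≤ numSubspacesContaining F k ![v] :=
  card_le_card fun W hW => by
    simp_all [Fin.forall_fin_two]

theorem sum_card_filter_mem_subspacesOfRank {P : Finset V} (hP : 0 ∉ P) {v : V} (hv : v ≠ 0) :
    ∑ W ∈ subspacesOfRank F V k, #{p ∈ P | p ∈ W} = #P * numSubspacesContaining F k ![v] := by
  refine (sum_card_bipartiteAbove_eq_sum_card_bipartiteBelow (fun p W => p ∈ W)).symm.trans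
    (sum_const_nat fun p hp => ?_)
  rw [← numSubspacesContaining_singleton_eq (ne_of_mem_of_not_mem hp hP) hv]
  simp [numSubspacesContaining, bipartiteAbove]

variable [Fintype F]

theorem card_linearIndependent_mem (W : Submodule F V) (m : ℕ) :
    #{b : Fin m → V | LinearIndependent F b ∧ ∀ i, b i ∈ W} =
      ∏ i : Fin m, (q ^ finrank F W - q ^ (i : ℕ)) := by
  by_cases hm : m ≤ finrank F W
  · rw [← Fintype.card_subtype, ← Nat.card_eq_fintype_card, ← card_linearIndependent hm]
    exact Nat.card_congr
      { toFun := fun b => ⟨fun i => ⟨b.1 i, b.2.2 i⟩, .of_comp W.subtype b.2.1⟩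
        invFun := fun s => ⟨W.subtype ∘ s.1, s.2.map' _ W.ker_subtype, fun i => (s.1 i).2⟩ }
  · rw [prod_eq_zero (i := (⟨finrank F W, by omega⟩ : Fin m)) (mem_univ _) (Nat.sub_self _),
      card_eq_zero, filter_eq_empty_iff]
    rintro b - ⟨hb, hbW⟩
    have hbW' : LinearIndependent F fun i => (⟨b i, hbW i⟩ : W) := .of_comp W.subtype hb
    have := hbW'.fintype_card_le_finrank
    simp only [Fintype.card_fin] at this
    omega

theorem numSubspacesContaining_mul_prod {m : ℕ} {b : Fin m → V} (hb : LinearIndependent F b) :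
    numSubspacesContaining F k b * ∏ i : Fin m, (q ^ finrank F V - q ^ (i : ℕ)) =
      #(subspacesOfRank F V k) * ∏ i : Fin m, (q ^ k - q ^ (i : ℕ)) := by
  set indep : Finset (Fin m → V) := {b' | LinearIndependent F b'}
  have hcard : #indep = ∏ i : Fin m, (q ^ finrank F V - q ^ (i : ℕ)) := by
    simpa using card_linearIndependent_mem (⊤ : Submodule F V) m
  calc numSubspacesContaining F k b * ∏ i : Fin m, (q ^ finrank F V - q ^ (i : ℕ))
      = ∑ b' ∈ indep, numSubspacesContaining F k b' := by
        rw [sum_congr rfl fun b' hb' => numSubspacesContaining_eq_of_linearIndependent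
          (mem_filter.1 hb').2 hb, sum_const, hcard, smul_eq_mul, mul_comm]
    _ = ∑ W ∈ subspacesOfRank F V k, #(indep.bipartiteBelow (fun b' W => ∀ i, b' i ∈ W) W) :=
        by
        -- the two sides carry different `Decidable` instances for `∀ i, b' i ∈ W`
        convert sum_card_bipartiteAbove_eq_sum_card_bipartiteBelow _ using 2
        simp only [numSubspacesContaining, bipartiteAbove]
        congr!
    _ = ∑ W ∈ subspacesOfRank F V k, ∏ i : Fin m, (q ^ k - q ^ (i : ℕ)) :=
        sum_congr rfl fun W hW => by
          rw [bipartiteBelow, filter_filter, card_linearIndependent_mem, (mem_filter.1 hW).2]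
    _ = #(subspacesOfRank F V k) * ∏ i : Fin m, (q ^ k - q ^ (i : ℕ)) := by
        rw [sum_const, smul_eq_mul]

theorem numSubspacesContaining_singleton_mul {v : V} (hv : v ≠ 0) :
    numSubspacesContaining F k ![v] * (q ^ finrank F V - 1) =
      #(subspacesOfRank F V k) * (q ^ k - 1) := by
  simpa using
    numSubspacesContaining_mul_prod (k := k) (linearIndependent_unique_iff (v := ![v]) |>.2 hv)

theorem numSubspacesContaining_pair_mul {v w : V} (h : LinearIndependent F ![v, w]) :
    numSubspacesContaining F k ![v, w] * ((q ^ finrank F V - 1) * (q ^ finrank F V - q)) =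
      #(subspacesOfRank F V k) * ((q ^ k - 1) * (q ^ k - q)) := by
  simpa [Fin.prod_univ_two] using numSubspacesContaining_mul_prod (k := k) h

theorem card_mul_numSubspacesContaining_pair_le (hk : k ≤ finrank F V) {v w : V}
    (h : LinearIndependent F ![v, w]) :
    #(subspacesOfRank F V k) * numSubspacesContaining F k ![v, w] ≤
      numSubspacesContaining F k ![v] ^ 2 := by
  set N := #(subspacesOfRank F V k)
  set f := numSubspacesContaining F k ![v]
  set g := numSubspacesContaining F k ![v, w]
  set n := finrank F V
  have hq : 1 < q := Fintype.one_lt_card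
  have hn : 2 ≤ n := by simpa using h.fintype_card_le_finrank
  have hA : 0 < q ^ n - 1 := Nat.sub_pos_of_lt (Nat.one_lt_pow (by omega) hq)
  have hB : 0 < q ^ n - q :=
    Nat.sub_pos_of_lt (by simpa using Nat.pow_lt_pow_right hq (by omega : 1 < n))
  have hf : f * (q ^ n - 1) = N * (q ^ k - 1) :=
    numSubspacesContaining_singleton_mul (h.ne_zero 0)
  refine Nat.le_of_mul_le_mul_right ?_ (Nat.mul_pos (Nat.mul_pos hA hA) hB)
  calc N * g * ((q ^ n - 1) * (q ^ n - 1) * (q ^ n - q))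
      = N * (q ^ n - 1) * (g * ((q ^ n - 1) * (q ^ n - q))) := by ring
    _ = N * N * (q ^ k - 1) * ((q ^ k - q) * (q ^ n - 1)) := by
        rw [numSubspacesContaining_pair_mul h]; ring
    _ ≤ N * N * (q ^ k - 1) * ((q ^ k - 1) * (q ^ n - q)) :=
        Nat.mul_le_mul_left _ (pow_sub_mul_pow_sub_le hq.le hk)
    _ = f ^ 2 * ((q ^ n - 1) * (q ^ n - 1) * (q ^ n - q)) := by
        rw [show f ^ 2 * ((q ^ n - 1) * (q ^ n - 1) * (q ^ n - q)) =
          (f * (q ^ n - 1)) * (f * (q ^ n - 1)) * (q ^ n - q) by ring, hf]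
        ring

theorem card_mul_numSubspacesContaining_pair_le_add (hk : k ≤ finrank F V) {v : V} (hv : v ≠ 0)
    (w : V) :
    #(subspacesOfRank F V k) * numSubspacesContaining F k ![v, w] ≤
      numSubspacesContaining F k ![v] ^ 2 +
        if w ∈ span F {v} then #(subspacesOfRank F V k) * numSubspacesContaining F k ![v]
        else 0 := by
  split_ifs with hw
  · exact le_add_left (Nat.mul_le_mul_left _ (numSubspacesContaining_pair_le v w))
  · refine (card_mul_numSubspacesContaining_pair_le hk ?_).trans (le_add_right le_rfl)
    exact (LinearIndependent.pair_iff' hv).2 fun a ha =>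
      hw (ha ▸ smul_mem _ _ (mem_span_singleton_self v))

theorem card_mul_sum_card_filter_mem_sq_le (hk : k ≤ finrank F V) {P : Finset V} (hP : 0 ∉ P)
    {v : V} (hv : v ≠ 0) :
    #(subspacesOfRank F V k) * ∑ W ∈ subspacesOfRank F V k, #{p ∈ P | p ∈ W} ^ 2 ≤
      (#P * numSubspacesContaining F k ![v]) ^ 2 +
        #P * q * (#(subspacesOfRank F V k) * numSubspacesContaining F k ![v]) := by
  set N := #(subspacesOfRank F V k)
  set f := numSubspacesContaining F k ![v]
  have hf : ∀ p ∈ P, numSubspacesContaining F k ![p] = f := fun p hp =>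
    numSubspacesContaining_singleton_eq (ne_of_mem_of_not_mem hp hP) hv
  calc N * ∑ W ∈ subspacesOfRank F V k, #{p ∈ P | p ∈ W} ^ 2
      = ∑ p ∈ P, ∑ p' ∈ P, N * numSubspacesContaining F k ![p, p'] := by
        simp only [sum_card_filter_sq, mul_sum]
        simp [numSubspacesContaining, Fin.forall_fin_two]
    _ ≤ ∑ p ∈ P, ∑ p' ∈ P, (f ^ 2 + if p' ∈ span F {p} then N * f else 0) :=
        sum_le_sum fun p hp => sum_le_sum fun p' _ => hf p hp ▸
          card_mul_numSubspacesContaining_pair_le_add hk (ne_of_mem_of_not_mem hp hP) p'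
    _ = ∑ p ∈ P, (#P * f ^ 2 + #{p' ∈ P | p' ∈ span F {p}} * (N * f)) := by
        simp [sum_add_distrib, sum_ite]
    _ ≤ ∑ p ∈ P, (#P * f ^ 2 + q * (N * f)) :=
        sum_le_sum fun p _ => Nat.add_le_add_left
          (Nat.mul_le_mul_right _ (card_filter_mem_span_singleton_le P p)) _
    _ = (#P * f) ^ 2 + #P * q * (N * f) := by
        rw [sum_const, smul_eq_mul]; ring

theorem variance_card_filter_mem_le (hk : k ≤ finrank F V) {P : Finset V} (hP : 0 ∉ P) :
    (∑ W ∈ subspacesOfRank F V k, (#{p ∈ P | p ∈ W} : ℝ) ^ 2) / #(subspacesOfRank F V k) -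
        ((∑ W ∈ subspacesOfRank F V k, (#{p ∈ P | p ∈ W} : ℝ)) / #(subspacesOfRank F V k)) ^ 2 ≤
      #P * q * (q ^ k - 1) / (q ^ finrank F V - 1) := by
  rcases P.eq_empty_or_nonempty with rfl | ⟨v, hv⟩
  · simp
  have hv0 : v ≠ 0 := ne_of_mem_of_not_mem hv hP
  set N := #(subspacesOfRank F V k)
  set f := numSubspacesContaining F k ![v]
  have hN : (0 : ℝ) < N := by exact_mod_cast (subspacesOfRank_nonempty hk).card_pos
  have hqn : (q : ℝ) ^ finrank F V - 1 ≠ 0 := by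
    have : 1 < q ^ finrank F V :=
      Nat.one_lt_pow (finrank_pos_iff_exists_ne_zero.2 ⟨v, hv0⟩).ne' Fintype.one_lt_card
    exact sub_ne_zero.2 (by exact_mod_cast this.ne')
  have hfN : (f : ℝ) * (q ^ finrank F V - 1) = N * (q ^ k - 1) := by
    have h := congrArg (Nat.cast (R := ℝ))
      (numSubspacesContaining_singleton_mul (F := F) (k := k) hv0)
    push_cast [Nat.cast_sub (Nat.one_le_pow _ _ (Fintype.card_pos (α := F)))] at h
    exact h
  have hsum : ∑ W ∈ subspacesOfRank F V k, (#{p ∈ P | p ∈ W} : ℝ) = #P * f := by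
    exact_mod_cast sum_card_filter_mem_subspacesOfRank hP hv0
  have hsq : N * ∑ W ∈ subspacesOfRank F V k, (#{p ∈ P | p ∈ W} : ℝ) ^ 2 ≤
      (#P * f) ^ 2 + #P * q * (N * f) := by
    exact_mod_cast card_mul_sum_card_filter_mem_sq_le hk hP hv0
  rw [hsum]
  calc _ ≤ (#P * q * (N * f) : ℝ) / N ^ 2 := div_sub_div_sq_le hN hsq
    _ = #P * q * (f * (q ^ finrank F V - 1)) / (N * (q ^ finrank F V - 1)) := by
        field_simp
    _ = #P * q * (q ^ k - 1) / (q ^ finrank F V - 1) := by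
        rw [hfN]
        field_simp

end Counting

section Cubes

variable {F V : Type*} [Field F] [AddCommGroup V] [Module F V]

theorem AffineSubspace.mk'_injective (x : V) :
    Function.Injective fun W : Submodule F V => AffineSubspace.mk' x W :=
  Function.LeftInverse.injective (g := AffineSubspace.direction) fun W => direction_mk' x W

theorem ncard_mk'_inter [Fintype V] (x : V) (W : Submodule F V) (Y : Set V) :
    ((AffineSubspace.mk' x W : Set V) ∩ Y).ncard = #{p ∈ {p | p + x ∈ Y} | p ∈ W} := by
  refine Eq.trans ?_ ((Set.ncard_image_of_injective _ (add_left_injective x)).trans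
    (Set.ncard_coe_finset _))
  congr 1
  ext y
  simp [AffineSubspace.mem_mk', and_comm, sub_eq_add_neg]

theorem cubesOn_eq_image {F : Type} [Field F] [Fintype F] {n : ℕ} (x : Fin n → F) :
    cubesOn F n x = AffineSubspace.mk' x '' (subspacesOfRank F (Fin n → F) 3 : Set _) := by
  ext C
  constructor
  · rintro ⟨⟨-, hC⟩, hx⟩
    exact ⟨C.direction, by simpa [subspacesOfRank] using hC, AffineSubspace.mk'_eq hx⟩
  · rintro ⟨W, hW, rfl⟩
    refine ⟨⟨⟨x, AffineSubspace.self_mem_mk' x W⟩, ?_⟩, AffineSubspace.self_mem_mk' x W⟩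
    rw [AffineSubspace.direction_mk']
    simpa [subspacesOfRank] using hW

end Cubes

theorem z_variance_general {F : Type} [Field F] [Fintype F] {n : ℕ} (hn : 3 ≤ n)
    (x : Fin n → F) (Y : Set (Fin n → F)) (hY : x ∉ Y) :
    (∑ᶠ C ∈ cubesOn F n x, (((C : Set (Fin n → F)) ∩ Y).ncard : ℝ) ^ 2) /
          ((cubesOn F n x).ncard : ℝ) -
        ((∑ᶠ C ∈ cubesOn F n x, (((C : Set (Fin n → F)) ∩ Y).ncard : ℝ)) /
          ((cubesOn F n x).ncard : ℝ)) ^ 2 ≤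
      2 * ((Y.ncard : ℝ) / (Fintype.card F : ℝ) ^ n) * (Fintype.card F : ℝ) ^ 4 := by
  set P : Finset (Fin n → F) := {p | p + x ∈ Y}
  have hP : (0 : Fin n → F) ∉ P := by simpa [P] using hY
  have hYP : Y.ncard = #P := by simpa using ncard_mk'_inter x (⊤ : Submodule F (Fin n → F)) Y
  have hinj := (AffineSubspace.mk'_injective (F := F) x).injOn
    (s := ↑(subspacesOfRank F (Fin n → F) 3))
  rw [cubesOn_eq_image, finsum_mem_image hinj, finsum_mem_image hinj, hinj.ncard_image,
    finsum_mem_coe_finset, finsum_mem_coe_finset, Set.ncard_coe_finset]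
  simp only [ncard_mk'_inter]
  refine (variance_card_filter_mem_le (by simpa using hn) hP).trans ?_
  rw [hYP, finrank_fin_fun]
  exact mul_mul_pow_three_sub_one_div_le (Nat.cast_nonneg _) (by exact_mod_cast Fintype.card_pos)
    (by exact_mod_cast Nat.one_lt_pow (by omega) (Fintype.one_lt_card (α := F)))

/-- For nonempty `Y ⊆ F_q^n ∖ {x}` and `z(C) = |C ∩ Y|`, the variance of
`z(C)` over a uniform cube `C ∈ 𝒞_x` is at most `2(|Y|/q^n)q⁴`. -/
theorem z_variance {F : Type} [Field F] [Fintype F] {n : ℕ} (hn : 3 ≤ n)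
    (x : Fin n → F) (Y : Set (Fin n → F)) (hY : x ∉ Y) (hYne : Y.Nonempty) :
    (∑ᶠ C ∈ cubesOn F n x, (((C : Set (Fin n → F)) ∩ Y).ncard : ℝ) ^ 2) /
          ((cubesOn F n x).ncard : ℝ) -
        ((∑ᶠ C ∈ cubesOn F n x, (((C : Set (Fin n → F)) ∩ Y).ncard : ℝ)) /
          ((cubesOn F n x).ncard : ℝ)) ^ 2 ≤
      2 * ((Y.ncard : ℝ) / (Fintype.card F : ℝ) ^ n) * (Fintype.card F : ℝ) ^ 4 :=
  z_variance_general hn x Y hY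
end

section
/- Let n ≥ 3, d ≥ 1, and let g, h : F_q^n → F_q be functions given by n-variate polynomials over F_q of total degree at most d with g ≠ h (as functions). Then for any two distinct points x, y ∈ F_q^n, the probability over a uniformly random cube C ∈ 𝒞_{x,y} that g|_C = h|_C is at most 4d²/q². -/
/-!
Put `f = g - h`, a nonzero polynomial of degree at most `d`; by Schwartz–Zippel its zero set `Z`
has at most `d q^(n-1)` points. Cubes through `x` and `y` are parametrised by pairs `(u, v)` with
`y - x, u, v` linearly independent, via `C = aff {x, y, x + u, x + v}`: every cube of `𝒞_{x,y}`
arises from exactly `N = (q³ - q)(q³ - q²)` pairs, out of `(q^n - q)(q^n - q²)` pairs in all.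
If `g = h` on `C`, the points `x + u`, `x + v` lie in `Z`, so the agreeing cubes account for at
most `|Z|²` pairs, and `|Z|² ≤ d² q^(2n-2) ≤ 4 d² q^(-2) (q^n - q)(q^n - q²)` as soon as
`q^n ≥ 2 q²`.
-/

open MvPolynomial

open Module Submodule Set

theorem MvPolynomial.ncard_zeroSet_mul_card_le {R : Type*} [CommRing R] [IsDomain R] [Fintype R]
    {n : ℕ} {p : MvPolynomial (Fin n) R} (hp : p ≠ 0) :
    {z : Fin n → R | eval z p = 0}.ncard * Fintype.card R ≤
      p.totalDegree * Fintype.card R ^ n := by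
  classical
  have hsz := schwartz_zippel_totalDegree hp Finset.univ
  rw [Fintype.piFinset_univ, Finset.card_univ,
    div_le_div_iff₀ (by positivity) (by exact_mod_cast Fintype.card_pos)] at hsz
  rw [ncard_eq_toFinset_card', toFinset_ofPred]
  exact_mod_cast hsz

theorem Set.ncard_eq_mul_of_fibers {α β : Type*} [Finite α] [Finite β] {s : Set α} {t : Set β}
    {f : α → β} {m : ℕ}
    (hf : MapsTo f s t) (hfib : ∀ b ∈ t, {a ∈ s | f a = b}.ncard = m) :
    s.ncard = t.ncard * m := by
  classical
  cases nonempty_fintype α; cases nonempty_fintype β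
  rw [ncard_eq_toFinset_card', ncard_eq_toFinset_card',
    Finset.card_eq_sum_card_fiberwise (f := f) (t := t.toFinset) (by simpa using hf),
    Finset.sum_const_nat]
  intro b hb
  rw [← hfib b (by simpa using hb), ncard_eq_toFinset_card']
  congr 1; ext; simp

section LinearAlgebra
variable {K V : Type*} [Field K] [AddCommGroup V] [Module K V]

theorem span_range_eq_iff {ι : Type*} [Fintype ι] {b : ι → V} {W : Submodule K V}
    [FiniteDimensional K W] (hW : finrank K W = Fintype.card ι) :
    span K (range b) = W ↔ range b ⊆ W ∧ LinearIndependent K b := by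
  constructor
  · rintro rfl
    exact ⟨subset_span, linearIndependent_iff_card_eq_finrank_span.mpr hW.symm⟩
  · rintro ⟨hbW, hb⟩
    exact eq_of_le_of_finrank_eq (span_le.mpr hbW) ((finrank_span_eq_card hb).trans hW.symm)

variable [Fintype K] [Finite V]

theorem ncard_coe_submodule (W : Submodule K V) :
    (W : Set V).ncard = Fintype.card K ^ finrank K W := by
  rw [← Nat.card_coe_set_eq, SetLike.coe_sort_coe, Module.natCard_eq_pow_finrank (K := K),
    Nat.card_eq_fintype_card]

theorem ncard_setOf_linearIndependent_snoc {m : ℕ} {b : Fin m → V} (hb : LinearIndependent K b)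
    {W : Submodule K V} (hbW : range b ⊆ W) :
    {v | v ∈ W ∧ LinearIndependent K (Fin.snoc b v : Fin (m + 1) → V)}.ncard =
      Fintype.card K ^ finrank K W - Fintype.card K ^ m := by
  have hset : {v | v ∈ W ∧ LinearIndependent K (Fin.snoc b v : Fin (m + 1) → V)} =
      (W : Set V) \ span K (range b) := by
    ext v; simp [linearIndependent_finSnoc, hb]
  rw [hset, ncard_sdiff (span_le.mpr hbW), ncard_coe_submodule, ncard_coe_submodule,
    finrank_span_eq_card hb, Fintype.card_fin]

theorem ncard_setOf_linearIndependent_triple {e : V} (he : e ≠ 0) {W : Submodule K V}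
    (heW : e ∈ W) :
    {p : V × V | p.1 ∈ W ∧ p.2 ∈ W ∧ LinearIndependent K ![e, p.1, p.2]}.ncard =
      (Fintype.card K ^ finrank K W - Fintype.card K) *
        (Fintype.card K ^ finrank K W - Fintype.card K ^ 2) := by
  have snoc₁ (u : V) : ![e, u] = Fin.snoc ![e] u := by ext i; fin_cases i <;> rfl
  have snoc₂ (u v : V) : ![e, u, v] = Fin.snoc ![e, u] v := by ext i; fin_cases i <;> rfl
  set q := Fintype.card K
  have he' : LinearIndependent K ![e] := by simpa using he
  rw [ncard_eq_mul_of_fibers (f := Prod.fst) (t := {u | u ∈ W ∧ LinearIndependent K ![e, u]})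
    (m := q ^ finrank K W - q ^ 2)]
  · simp_rw [snoc₁]
    rw [ncard_setOf_linearIndependent_snoc he' (by simpa using heW), pow_one]
  · rintro ⟨u, v⟩ ⟨hu, -, huv⟩
    rw [snoc₂, linearIndependent_finSnoc] at huv
    exact ⟨hu, huv.1⟩
  · rintro u ⟨hu, heu⟩
    have hfib :
        {p ∈ {p : V × V | p.1 ∈ W ∧ p.2 ∈ W ∧ LinearIndependent K ![e, p.1, p.2]} | p.1 = u} =
          Prod.mk u '' {v | v ∈ W ∧ LinearIndependent K (Fin.snoc ![e, u] v)} := by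
      ext ⟨u', v⟩
      simp only [snoc₂]
      aesop
    rw [hfib, ncard_image_of_injective _ (Prod.mk_right_injective u),
      ncard_setOf_linearIndependent_snoc heu (by simp [insert_subset_iff, hu, heW])]

end LinearAlgebra

section Cubes
variable {F : Type} [Field F] {n : ℕ}

def cubeSpan (x y u v : Fin n → F) : AffineSubspace F (Fin n → F) :=
  affineSpan F {x, y, x + u, x + v}

theorem left_mem_cubeSpan (x y u v : Fin n → F) : x ∈ cubeSpan x y u v :=
  subset_affineSpan F _ (by simp)

theorem direction_cubeSpan (x y u v : Fin n → F) :
    (cubeSpan x y u v).direction = span F (range ![y - x, u, v]) := by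
  rw [cubeSpan, direction_affineSpan, vectorSpan_eq_span_vsub_set_right F (mem_insert x _)]
  rw [Matrix.range_cons, Matrix.range_cons_cons_empty, singleton_union]
  simp [image_insert_eq, span_insert_zero]

variable [Fintype F]

theorem cubeSpan_mem_cubesOn2_iff {x y u v : Fin n → F} :
    cubeSpan x y u v ∈ cubesOn2 F n x y ↔ LinearIndependent F ![y - x, u, v] := by
  rw [linearIndependent_iff_card_eq_finrank_span, Set.finrank, ← direction_cubeSpan]
  have hx := left_mem_cubeSpan x y u v
  have hy : y ∈ cubeSpan x y u v := subset_affineSpan F _ (by simp)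
  exact ⟨fun hC => hC.1.2.symm, fun h3 => ⟨⟨⟨x, hx⟩, h3.symm⟩, hx, hy⟩⟩

theorem cubeSpan_eq_iff {x y u v : Fin n → F} {C : AffineSubspace F (Fin n → F)}
    (hC : C ∈ cubesOn2 F n x y) :
    cubeSpan x y u v = C ↔
      u ∈ C.direction ∧ v ∈ C.direction ∧ LinearIndependent F ![y - x, u, v] := by
  obtain ⟨⟨-, hC3⟩, hxC, hyC⟩ := hC
  have hyx : y - x ∈ C.direction := by simpa using C.vsub_mem_direction hyC hxC
  have hdir : cubeSpan x y u v = C ↔ (cubeSpan x y u v).direction = C.direction :=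
    ⟨congrArg _, (AffineSubspace.ext_of_direction_eq · ⟨x, left_mem_cubeSpan .., hxC⟩)⟩
  rw [hdir, direction_cubeSpan, span_range_eq_iff (by simpa using hC3)]
  rw [Matrix.range_cons, Matrix.range_cons_cons_empty, singleton_union]
  simp [insert_subset_iff, hyx, and_assoc]

theorem ncard_setOf_cubeSpan_mem {x y : Fin n → F} (hxy : x ≠ y)
    {T : Set (AffineSubspace F (Fin n → F))} (hT : T ⊆ cubesOn2 F n x y) :
    {p : (Fin n → F) × (Fin n → F) | cubeSpan x y p.1 p.2 ∈ T}.ncard =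
      T.ncard * ((Fintype.card F ^ 3 - Fintype.card F) *
        (Fintype.card F ^ 3 - Fintype.card F ^ 2)) := by
  refine ncard_eq_mul_of_fibers (fun p hp => hp) fun C hC => ?_
  obtain ⟨⟨-, hC3⟩, hxC, hyC⟩ := hT hC
  have hfib : {p ∈ {p : (Fin n → F) × (Fin n → F) | cubeSpan x y p.1 p.2 ∈ T} |
      cubeSpan x y p.1 p.2 = C} = {p | p.1 ∈ C.direction ∧ p.2 ∈ C.direction ∧
        LinearIndependent F ![y - x, p.1, p.2]} := by
    ext p
    simp only [mem_ofPred_eq, ← cubeSpan_eq_iff (hT hC)]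
    exact ⟨And.right, fun h => ⟨h ▸ hC, h⟩⟩
  rw [hfib, ncard_setOf_linearIndependent_triple (sub_ne_zero.mpr hxy.symm)
    (by simpa using C.vsub_mem_direction hyC hxC), hC3]

theorem ncard_cubesOn2_mul {x y : Fin n → F} (hxy : x ≠ y) :
    (cubesOn2 F n x y).ncard * ((Fintype.card F ^ 3 - Fintype.card F) *
        (Fintype.card F ^ 3 - Fintype.card F ^ 2)) =
      (Fintype.card F ^ n - Fintype.card F) * (Fintype.card F ^ n - Fintype.card F ^ 2) := by
  rw [← ncard_setOf_cubeSpan_mem hxy subset_rfl]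
  simpa [cubeSpan_mem_cubesOn2_iff] using
    ncard_setOf_linearIndependent_triple (K := F) (sub_ne_zero.mpr hxy.symm) (mem_top (x := y - x))

theorem ncard_mul_le_sq_of_forall_subset {x y : Fin n → F} (hxy : x ≠ y)
    {T : Set (AffineSubspace F (Fin n → F))} (hT : T ⊆ cubesOn2 F n x y) {Z : Set (Fin n → F)}
    (hZ : ∀ C ∈ T, (C : Set (Fin n → F)) ⊆ Z) :
    T.ncard * ((Fintype.card F ^ 3 - Fintype.card F) *
        (Fintype.card F ^ 3 - Fintype.card F ^ 2)) ≤ Z.ncard ^ 2 := by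
  have hsub : {p : (Fin n → F) × (Fin n → F) | cubeSpan x y p.1 p.2 ∈ T} ⊆
      ((x + ·) ⁻¹' Z) ×ˢ ((x + ·) ⁻¹' Z) := fun p hp =>
    ⟨hZ _ hp (subset_affineSpan F _ (by simp)), hZ _ hp (subset_affineSpan F _ (by simp))⟩
  have htrans : ((x + ·) ⁻¹' Z).ncard = Z.ncard :=
    ncard_preimage_of_injective_subset_range (add_right_injective x)
      (by simp [(add_left_surjective x).range_eq])
  rw [← ncard_setOf_cubeSpan_mem hxy hT, sq, ← htrans, ← ncard_prod]
  exact ncard_le_ncard hsub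

end Cubes

theorem sq_pow_le_four_mul_sub_mul_sub (q : ℕ) {n : ℕ} (hq : 2 ≤ q) (hn : 3 ≤ n) :
    (q ^ n) ^ 2 ≤ 4 * ((q ^ n - q) * (q ^ n - q ^ 2)) := by
  have hq2 : q ≤ q ^ 2 := Nat.le_self_pow two_ne_zero q
  have hqn : 2 * q ^ 2 ≤ q ^ n :=
    calc 2 * q ^ 2 ≤ q * q ^ 2 := Nat.mul_le_mul_right _ hq
      _ = q ^ 3 := by ring
      _ ≤ q ^ n := Nat.pow_le_pow_right (by omega) hn
  calc (q ^ n) ^ 2 ≤ (2 * (q ^ n - q)) * (2 * (q ^ n - q ^ 2)) := by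
        rw [sq]; exact Nat.mul_le_mul (by omega) (by omega)
    _ = 4 * ((q ^ n - q) * (q ^ n - q ^ 2)) := by ring

theorem distinct_polys_rarely_agree_general {F : Type} [Field F] [Fintype F] {n d : ℕ}
    (hn : 3 ≤ n)
    (g h : MvPolynomial (Fin n) F) (hg : g.totalDegree ≤ d) (hh : h.totalDegree ≤ d)
    (hne : ∃ z : Fin n → F, eval z g ≠ eval z h)
    (x y : Fin n → F) (hxy : x ≠ y) :
    ({C ∈ cubesOn2 F n x y | ∀ z : Fin n → F, z ∈ C → eval z g = eval z h}.ncard : ℝ) ≤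
      (4 * (d : ℝ) ^ 2 / (Fintype.card F : ℝ) ^ 2) * ((cubesOn2 F n x y).ncard : ℝ) := by
  set q := Fintype.card F
  set Agree := {C ∈ cubesOn2 F n x y | ∀ z : Fin n → F, z ∈ C → eval z g = eval z h}
  set N := (q ^ 3 - q) * (q ^ 3 - q ^ 2)
  set Z := {z : Fin n → F | eval z (g - h) = 0}
  have hgh : g - h ≠ 0 := by
    obtain ⟨z, hz⟩ := hne
    exact fun h0 => hz (by simpa [sub_eq_zero] using congrArg (eval z) h0)
  have hZ : Z.ncard * q ≤ d * q ^ n := (ncard_zeroSet_mul_card_le hgh).trans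
    (Nat.mul_le_mul_right _ ((totalDegree_sub g h).trans (max_le hg hh)))
  have hagree : Agree.ncard * N ≤ Z.ncard ^ 2 :=
    ncard_mul_le_sq_of_forall_subset hxy (sep_subset _ _) fun C hC z hz => by
      simp [Z, sub_eq_zero, hC.2 z hz]
  have hq : 2 ≤ q := Fintype.one_lt_card
  have hN : 0 < N := by
    have := sq_pow_le_four_mul_sub_mul_sub q hq le_rfl
    exact Nat.pos_of_ne_zero fun h0 => by simp [N, h0] at this; omega
  have key : Agree.ncard * q ^ 2 ≤ 4 * d ^ 2 * (cubesOn2 F n x y).ncard := by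
    refine Nat.le_of_mul_le_mul_right ?_ hN
    calc Agree.ncard * q ^ 2 * N ≤ Z.ncard ^ 2 * q ^ 2 := by rw [mul_right_comm]; gcongr
      _ ≤ (d * q ^ n) ^ 2 := by rw [← mul_pow]; gcongr
      _ ≤ d ^ 2 * (4 * ((q ^ n - q) * (q ^ n - q ^ 2))) := by
        rw [mul_pow]; gcongr; exact sq_pow_le_four_mul_sub_mul_sub q hq hn
      _ = 4 * d ^ 2 * (cubesOn2 F n x y).ncard * N := by rw [← ncard_cubesOn2_mul hxy]; ring
  rw [div_mul_eq_mul_div, le_div_iff₀ (by positivity)]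
  exact_mod_cast key

/-- If `g ≠ h` as functions, both given by polynomials of total degree at
most `d`, then for distinct points `x, y`, the fraction of cubes `C ∈ 𝒞_{x,y}` on which
`g|_C = h|_C` is at most `4d²/q²`. -/
theorem distinct_polys_rarely_agree {F : Type} [Field F] [Fintype F] {n d : ℕ}
    (hn : 3 ≤ n) (hd : 1 ≤ d)
    (g h : MvPolynomial (Fin n) F) (hg : g.totalDegree ≤ d) (hh : h.totalDegree ≤ d)
    (hne : ∃ z : Fin n → F, eval z g ≠ eval z h)
    (x y : Fin n → F) (hxy : x ≠ y) :
    ({C ∈ cubesOn2 F n x y | ∀ z : Fin n → F, z ∈ C → eval z g = eval z h}.ncard : ℝ) ≤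
      (4 * (d : ℝ) ^ 2 / (Fintype.card F : ℝ) ^ 2) * ((cubesOn2 F n x y).ncard : ℝ) :=
  distinct_polys_rarely_agree_general hn g h hg hh hne x y hxy
end
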